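/- Let X be a normed space, and let (f_k)_{k∈ℕ} be a sequence of functions f_k : ℝ → X converging to f : ℝ → X uniformly on compact subsets of ℝ. Assume that lim_{x→+∞} f(x) = f*. Then there exist a sequence x_j → +∞ and a strictly increasing sequence of indices (k_j)_{j∈ℕ} such that, for every τ ∈ ℝ, ‖f_{k_j}(x_j + τ) − f*‖ → 0 as j → +∞. -/

import Mathlib

open Set Filter Topology

/-! Choose `x_j ≥ j` so far out that `f` is `1/(j+1)`-close to `f*` on `[x_j - j, ∞)`, and then
`k_j` so large that `f_{k_j}` is `1/(j+1)`-close to `f` on the compact window `[x_j - j, x_j + j]`.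
For fixed `τ`, the point `x_j + τ` lies in that window as soon as `|τ| ≤ j`, so
`dist (f_{k_j}(x_j + τ)) f* < 2/(j+1)`. -/

section

variable {α : Type*} [PseudoMetricSpace α]

lemma exists_le_forall_sub_le_dist_lt {g : ℝ → α} {a : α} (hg : Tendsto g atTop (𝓝 a))
    (R : ℝ) {ε : ℝ} (hε : 0 < ε) : ∃ x, R ≤ x ∧ ∀ y, x - R ≤ y → dist (g y) a < ε := by
  have hfar : ∀ᶠ x in atTop, ∀ y, x - R ≤ y → dist (g y) a < ε :=
    (tendsto_atTop_add_const_right _ (-R) tendsto_id).eventually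
      (eventually_forall_ge_atTop.2 (hg.eventually (Metric.ball_mem_nhds a hε)))
  exact ((eventually_ge_atTop R).and hfar).exists

lemma exists_tendsto_atTop_strictMono_tendsto_comp_add {f : ℕ → ℝ → α} {flim : ℝ → α}
    {fstar : α} (hconv : ∀ K : Set ℝ, IsCompact K → TendstoUniformlyOn f flim atTop K)
    (hlim : Tendsto flim atTop (𝓝 fstar)) :
    ∃ (x : ℕ → ℝ) (k : ℕ → ℕ), Tendsto x atTop atTop ∧ StrictMono k ∧
      ∀ τ : ℝ, Tendsto (fun j => f (k j) (x j + τ)) atTop (𝓝 fstar) := by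
  choose x hjx hx using fun j : ℕ =>
    exists_le_forall_sub_le_dist_lt hlim j (Nat.one_div_pos_of_nat (α := ℝ) (n := j))
  obtain ⟨k, hk, hkx⟩ := extraction_forall_of_eventually fun j =>
    Metric.tendstoUniformlyOn_iff.1 (hconv (Icc (x j - j) (x j + j)) isCompact_Icc) _
      (Nat.one_div_pos_of_nat (α := ℝ) (n := j))
  refine ⟨x, k, tendsto_atTop_mono hjx tendsto_natCast_atTop_atTop, hk, fun τ => ?_⟩
  have hbound : ∀ᶠ j : ℕ in atTop,
      dist (f (k j) (x j + τ)) fstar ≤ 1 / (j + 1) + 1 / (j + 1) := by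
    filter_upwards [tendsto_natCast_atTop_atTop.eventually_ge_atTop |τ|] with j hj
    have hwindow : x j + τ ∈ Icc (x j - j) (x j + j) := by
      constructor <;> linarith [neg_abs_le τ, le_abs_self τ]
    calc dist (f (k j) (x j + τ)) fstar
        ≤ dist (flim (x j + τ)) (f (k j) (x j + τ)) + dist (flim (x j + τ)) fstar :=
          dist_triangle_left _ _ _
      _ ≤ 1 / (j + 1) + 1 / (j + 1) :=
          add_le_add (hkx j _ hwindow).le (hx j _ (by linarith [hwindow.1])).le
  have hzero : Tendsto (fun j : ℕ => 1 / ((j : ℝ) + 1) + 1 / ((j : ℝ) + 1)) atTop (𝓝 0) := by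
    simpa using (tendsto_one_div_add_atTop_nhds_zero_nat (𝕜 := ℝ)).add
      tendsto_one_div_add_atTop_nhds_zero_nat
  exact tendsto_iff_dist_tendsto_zero.2 <|
    squeeze_zero' (Eventually.of_forall fun _ => dist_nonneg) hbound hzero

end

theorem diagonal_shift_convergence
    {X : Type*} [NormedAddCommGroup X]
    (f : ℕ → ℝ → X) (flim : ℝ → X) (fstar : X)
    (hconv : ∀ K : Set ℝ, IsCompact K → TendstoUniformlyOn f flim Filter.atTop K)
    (hlim : Filter.Tendsto flim Filter.atTop (𝓝 fstar)) :
    ∃ (x : ℕ → ℝ) (k : ℕ → ℕ),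
      Filter.Tendsto x Filter.atTop Filter.atTop ∧ StrictMono k ∧
      ∀ τ : ℝ, Filter.Tendsto (fun j => ‖f (k j) (x j + τ) - fstar‖) Filter.atTop (𝓝 0) := by
  obtain ⟨x, k, hx, hk, hτ⟩ := exists_tendsto_atTop_strictMono_tendsto_comp_add hconv hlim
  exact ⟨x, k, hx, hk, fun τ => tendsto_iff_norm_sub_tendsto_zero.1 (hτ τ)⟩
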